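/- arXiv:2508.21428 — 5 statements merged into one kernel-verified Lean document; each statement's English description precedes it below -/
import Mathlib

section
/- (Proposition 1, pointwise form.) Let n ≥ 1, u, y ∈ ℝⁿ, and for each i ∈ {1,…,n} let aᵢ, εᵢ, δᵢ ∈ ℝ satisfy aᵢ ≤ uᵢyᵢ − εᵢyᵢ² − δᵢuᵢ². Set δ = minᵢ δᵢ and ε = minᵢ εᵢ. Then uᵀ·proj_{S⊥}(y) ≥ Σᵢ aᵢ + (δ − ½)‖u‖₂² + (ε − ½)‖y‖₂². -/
open Matrix

/-- The projection matrix `P = I - (1/n) 𝟙 𝟙ᵀ` onto the orthogonal complement of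
the agreement subspace `span(𝟙)`. -/
noncomputable def projP (n : ℕ) : Matrix (Fin n) (Fin n) ℝ :=
  1 - (n : ℝ)⁻¹ • Matrix.of (fun _ _ => (1 : ℝ))

/-- Proposition 1 (pointwise form). If each agent satisfies the pointwise IOP
dissipation inequality `aᵢ ≤ uᵢ yᵢ - εᵢ yᵢ² - δᵢ uᵢ²`, then with `δ = minᵢ δᵢ`,
`ε = minᵢ εᵢ`:
`uᵀ proj_{S⊥}(y) ≥ Σᵢ aᵢ + (δ - ½)‖u‖₂² + (ε - ½)‖y‖₂²`. -/
theorem stmt_4 (n : ℕ) (hn : 1 ≤ n) (u y a ε δ : Fin n → ℝ)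
    (h : ∀ i, a i ≤ u i * y i - ε i * (y i) ^ 2 - δ i * (u i) ^ 2) :
    u ⬝ᵥ (projP n *ᵥ y) ≥
      (∑ i, a i) +
      (Finset.univ.inf' (Finset.univ_nonempty_iff.mpr ⟨⟨0, hn⟩⟩) δ - 1 / 2) * (u ⬝ᵥ u) +
      (Finset.univ.inf' (Finset.univ_nonempty_iff.mpr ⟨⟨0, hn⟩⟩) ε - 1 / 2) * (y ⬝ᵥ y) := by
  have hne : (Finset.univ : Finset (Fin n)).Nonempty := Finset.univ_nonempty_iff.mpr ⟨⟨0, hn⟩⟩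
  set d := Finset.univ.inf' hne δ with hd
  set e := Finset.univ.inf' hne ε with he
  have hN : (1:ℝ) ≤ (n:ℝ) := by exact_mod_cast hn
  have hNpos : (0:ℝ) < n := by linarith
  have hPv : ∀ i, (projP n *ᵥ y) i = y i - (n:ℝ)⁻¹ * ∑ j, y j := by
    intro i
    rw [projP, Matrix.sub_mulVec, Matrix.smul_mulVec, Matrix.one_mulVec]
    simp [Matrix.mulVec, dotProduct]
  have hproj : u ⬝ᵥ (projP n *ᵥ y) =
      (∑ i, u i * y i) - (n:ℝ)⁻¹ * ((∑ i, u i) * (∑ i, y i)) := by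
    simp only [dotProduct, hPv, mul_sub, Finset.sum_sub_distrib]
    rw [Finset.sum_mul, Finset.mul_sum, Finset.mul_sum]
    congr 1
    exact Finset.sum_congr rfl (fun i _ => by rw [← Finset.mul_sum]; ring)
  have huu : u ⬝ᵥ u = ∑ i, (u i)^2 := by simp [dotProduct, sq]
  have hyy : y ⬝ᵥ y = ∑ i, (y i)^2 := by simp [dotProduct, sq]
  have hsum : (∑ i, a i) ≤ (∑ i, u i * y i) - e * (∑ i, (y i)^2) - d * (∑ i, (u i)^2) := by
    rw [Finset.mul_sum, Finset.mul_sum, ← Finset.sum_sub_distrib, ← Finset.sum_sub_distrib]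
    apply Finset.sum_le_sum
    intro i _
    have h1 : e ≤ ε i := Finset.inf'_le _ (Finset.mem_univ i)
    have h2 : d ≤ δ i := Finset.inf'_le _ (Finset.mem_univ i)
    nlinarith [h i, sq_nonneg (y i), sq_nonneg (u i)]
  have hcsu : (∑ i, u i)^2 ≤ (n:ℝ) * ∑ i, (u i)^2 := by
    have := sq_sum_le_card_mul_sum_sq (s := Finset.univ) (f := u)
    simpa using this
  have hcsy : (∑ i, y i)^2 ≤ (n:ℝ) * ∑ i, (y i)^2 := by
    have := sq_sum_le_card_mul_sum_sq (s := Finset.univ) (f := y)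
    simpa using this
  have hkey : (n:ℝ)⁻¹ * ((∑ i, u i) * (∑ i, y i)) ≤
      (1/2) * (∑ i, (u i)^2) + (1/2) * (∑ i, (y i)^2) := by
    rw [inv_mul_le_iff₀ hNpos] at *
    nlinarith [sq_nonneg ((∑ i, u i) - (∑ i, y i))]
  rw [hproj, huu, hyy]
  nlinarith [hsum, hkey]
end

section
/- (Proposition 2, pointwise form.) Let n ≥ 2 and let E ∈ ℝ^{n×e} be a signed incidence matrix (each column has exactly one entry +1, exactly one entry −1, and zeros elsewhere). Let y ∈ ℝⁿ, μ ∈ ℝᵉ, ζ = Eᵀy, z = Eμ. Suppose for each k ∈ {1,…,e} there are bₖ ∈ ℝ and αₖ, γₖ ≥ 0 with bₖ ≤ μₖζₖ − αₖμₖ² − γₖζₖ², and set α = minₖ αₖ, γ = minₖ γₖ. Suppose λ₂ ∈ ℝ satisfies vᵀ(EEᵀ)v ≥ λ₂‖v‖₂² for every v orthogonal to 𝟙. Then zᵀ·proj_{S⊥}(y) ≥ Σₖ bₖ + α‖μ‖₂² + γλ₂‖proj_{S⊥}(y)‖₂². -/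
open Matrix

/-- `E` is a signed incidence matrix: each column has exactly one `+1` entry,
exactly one `-1` entry, and zeros elsewhere. -/
def IsSignedIncidence {n e : ℕ} (E : Matrix (Fin n) (Fin e) ℝ) : Prop :=
  ∀ k : Fin e, ∃ i j : Fin n, i ≠ j ∧ E i k = 1 ∧ E j k = -1 ∧
    ∀ l : Fin n, l ≠ i → l ≠ j → E l k = 0

lemma colsum {n e : ℕ} {E : Matrix (Fin n) (Fin e) ℝ} (hE : IsSignedIncidence E)
    (k : Fin e) : ∑ i, E i k = 0 := by
  obtain ⟨i, j, hij, h1, h2, h0⟩ := hE k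
  have : ∀ l, E l k = (if l = i then (1:ℝ) else 0) + (if l = j then (-1:ℝ) else 0) := by
    intro l
    by_cases hli : l = i
    · subst hli; simp [h1, hij]
    · by_cases hlj : l = j
      · subst hlj; simp [h2, Ne.symm hij, hli]
      · simp [hli, hlj, h0 l hli hlj]
  simp [this, Finset.sum_add_distrib]

/-- Proposition 2 (pointwise form). With `ζ = Eᵀ y`, `z = E μ`, pointwise IOP
inequalities `bₖ ≤ μₖ ζₖ - αₖ μₖ² - γₖ ζₖ²` with `αₖ, γₖ ≥ 0`, and `λ₂` a lower
Rayleigh bound of `E Eᵀ` on `𝟙⊥`: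
`zᵀ proj_{S⊥}(y) ≥ Σₖ bₖ + α ‖μ‖₂² + γ λ₂ ‖proj_{S⊥}(y)‖₂²`
where `α = minₖ αₖ`, `γ = minₖ γₖ`. -/
theorem stmt_8 (n e : ℕ) (hn : 2 ≤ n) (he : 1 ≤ e)
    (E : Matrix (Fin n) (Fin e) ℝ) (hE : IsSignedIncidence E)
    (y : Fin n → ℝ) (μ b α γ : Fin e → ℝ)
    (hα : ∀ k, 0 ≤ α k) (hγ : ∀ k, 0 ≤ γ k)
    (hb : ∀ k, b k ≤ μ k * (Eᵀ *ᵥ y) k - α k * (μ k) ^ 2 - γ k * ((Eᵀ *ᵥ y) k) ^ 2)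
    (lam2 : ℝ)
    (hlam2 : ∀ v : Fin n → ℝ, v ⬝ᵥ (fun _ => (1 : ℝ)) = 0 →
      lam2 * (v ⬝ᵥ v) ≤ v ⬝ᵥ ((E * Eᵀ) *ᵥ v)) :
    (E *ᵥ μ) ⬝ᵥ (projP n *ᵥ y) ≥
      (∑ k, b k) +
      (Finset.univ.inf' (Finset.univ_nonempty_iff.mpr ⟨⟨0, he⟩⟩) α) * (μ ⬝ᵥ μ) +
      (Finset.univ.inf' (Finset.univ_nonempty_iff.mpr ⟨⟨0, he⟩⟩) γ) * lam2 *
        ((projP n *ᵥ y) ⬝ᵥ (projP n *ᵥ y)) := by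
  have hne : (Finset.univ : Finset (Fin e)).Nonempty := Finset.univ_nonempty_iff.mpr ⟨⟨0, he⟩⟩
  set w := projP n *ᵥ y with hwdef
  set ζ := Eᵀ *ᵥ y with hζdef
  set αm := Finset.univ.inf' hne α with hαm
  set γm := Finset.univ.inf' hne γ with hγm
  have hn0 : (n : ℝ) ≠ 0 := by positivity
  have hw : ∀ i, w i = y i - (n : ℝ)⁻¹ * ∑ j, y j := by
    intro i
    simp [hwdef, projP, Matrix.sub_mulVec, Matrix.mulVec, dotProduct,
      Finset.mul_sum]
  -- w is orthogonal to the all-ones vector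
  have hw1 : w ⬝ᵥ (fun _ => (1 : ℝ)) = 0 := by
    have hcard : (Finset.univ : Finset (Fin n)).card = n := by simp
    simp only [dotProduct, mul_one]
    rw [Finset.sum_congr rfl (fun i _ => hw i), Finset.sum_sub_distrib]
    simp [Finset.sum_const, hcard, hn0]
  -- Eᵀ w = ζ
  have hζw : Eᵀ *ᵥ w = ζ := by
    funext k
    have : ∀ i, E i k * w i = E i k * y i - (n : ℝ)⁻¹ * (∑ j, y j) * E i k := by
      intro i; rw [hw i]; ring
    simp only [hζdef, Matrix.mulVec, dotProduct, Matrix.transpose_apply]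
    rw [Finset.sum_congr rfl (fun i _ => this i), Finset.sum_sub_distrib,
      ← Finset.mul_sum, colsum hE k]
    ring
  -- main dot-product identity
  have hmain : (E *ᵥ μ) ⬝ᵥ w = μ ⬝ᵥ ζ := by
    rw [dotProduct_comm, Matrix.dotProduct_mulVec,
      ← Matrix.mulVec_transpose, hζw, dotProduct_comm]
  clear_value w ζ
  -- Rayleigh bound
  have hray : lam2 * (w ⬝ᵥ w) ≤ ζ ⬝ᵥ ζ := by
    have h := hlam2 w hw1
    have e1 : w ⬝ᵥ ((E * Eᵀ) *ᵥ w) = ζ ⬝ᵥ ζ := by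
      calc w ⬝ᵥ ((E * Eᵀ) *ᵥ w) = w ⬝ᵥ (E *ᵥ (Eᵀ *ᵥ w)) := by
            rw [Matrix.mulVec_mulVec]
        _ = (Eᵀ *ᵥ w) ⬝ᵥ (Eᵀ *ᵥ w) := by
            rw [Matrix.dotProduct_mulVec, ← Matrix.mulVec_transpose]
        _ = ζ ⬝ᵥ ζ := by rw [hζw]
    rwa [e1] at h
  have hαm0 : ∀ k : Fin e, αm ≤ α k := fun k => Finset.inf'_le _ (Finset.mem_univ k)
  have hγm0 : ∀ k : Fin e, γm ≤ γ k := fun k => Finset.inf'_le _ (Finset.mem_univ k)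
  have hγnn : 0 ≤ γm := Finset.le_inf' hne _ (fun k _ => hγ k)
  have h1 : (∑ k, b k) + αm * (μ ⬝ᵥ μ) + γm * (ζ ⬝ᵥ ζ) ≤ μ ⬝ᵥ ζ := by
    have : ∀ k : Fin e, b k + αm * μ k ^ 2 + γm * ζ k ^ 2 ≤ μ k * ζ k := by
      intro k
      have h := hb k
      have ha : αm * μ k ^ 2 ≤ α k * μ k ^ 2 :=
        mul_le_mul_of_nonneg_right (hαm0 k) (sq_nonneg _)
      have hg : γm * ζ k ^ 2 ≤ γ k * ζ k ^ 2 :=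
        mul_le_mul_of_nonneg_right (hγm0 k) (sq_nonneg _)
      nlinarith
    calc (∑ k, b k) + αm * (μ ⬝ᵥ μ) + γm * (ζ ⬝ᵥ ζ)
        = ∑ k, (b k + αm * μ k ^ 2 + γm * ζ k ^ 2) := by
          simp [dotProduct, Finset.sum_add_distrib, Finset.mul_sum, sq]
      _ ≤ ∑ k, μ k * ζ k := Finset.sum_le_sum (fun k _ => this k)
      _ = μ ⬝ᵥ ζ := rfl
  have h2 : γm * lam2 * (w ⬝ᵥ w) ≤ γm * (ζ ⬝ᵥ ζ) := by
    rw [mul_assoc]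
    exact mul_le_mul_of_nonneg_left hray hγnn
  rw [ge_iff_le, hmain]
  linarith
end

section
/- (Remark after Proposition 2: variant for possibly negative passivity indices.) Let n ≥ 2 and let E ∈ ℝ^{n×e} be a signed incidence matrix (each column has exactly one entry +1, exactly one entry −1, and zeros elsewhere). Let y ∈ ℝⁿ, μ ∈ ℝᵉ, ζ = Eᵀy, z = Eμ. Suppose for each k there are bₖ ∈ ℝ and αₖ, γₖ ∈ ℝ with bₖ ≤ μₖζₖ − αₖμₖ² − γₖζₖ², set α = minₖ αₖ and γ = minₖ γₖ, and suppose γ ≤ 0 and λₙ ∈ ℝ satisfies vᵀ(EEᵀ)v ≤ λₙ‖v‖₂² for every v ∈ ℝⁿ. Then zᵀ·proj_{S⊥}(y) ≥ Σₖ bₖ + α‖μ‖₂² + γλₙ‖proj_{S⊥}(y)‖₂². -/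
open Matrix

lemma transpose_projP {n e : ℕ} {E : Matrix (Fin n) (Fin e) ℝ} (hE : IsSignedIncidence E)
    (y : Fin n → ℝ) : Eᵀ *ᵥ (projP n *ᵥ y) = Eᵀ *ᵥ y := by
  funext k
  have hp : ∀ i, (projP n *ᵥ y) i = y i - (n : ℝ)⁻¹ * ∑ j, y j := by
    intro i
    simp [projP, mulVec, dotProduct, sub_mul, Finset.sum_sub_distrib,
      Matrix.one_apply, ite_mul, Finset.mul_sum]
  have lhs : (Eᵀ *ᵥ (projP n *ᵥ y)) k = ∑ i, E i k * (projP n *ᵥ y) i := rfl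
  have rhs : (Eᵀ *ᵥ y) k = ∑ i, E i k * y i := rfl
  rw [lhs, rhs]
  calc ∑ i, E i k * (projP n *ᵥ y) i
      = ∑ i, (E i k * y i - E i k * ((n : ℝ)⁻¹ * ∑ j, y j)) := by
        refine Finset.sum_congr rfl fun i _ => ?_
        rw [hp i]; ring
    _ = (∑ i, E i k * y i) - (∑ i, E i k) * ((n : ℝ)⁻¹ * ∑ j, y j) := by
        rw [Finset.sum_sub_distrib, Finset.sum_mul]
    _ = ∑ i, E i k * y i := by rw [colsum hE k]; ring

/-- Remark after Proposition 2 (possibly negative passivity indices). With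
`ζ = Eᵀ y`, `z = E μ`, pointwise inequalities `bₖ ≤ μₖ ζₖ - αₖ μₖ² - γₖ ζₖ²`,
`γ = minₖ γₖ ≤ 0`, and `λₙ` an upper Rayleigh bound of `E Eᵀ`:
`zᵀ proj_{S⊥}(y) ≥ Σₖ bₖ + α ‖μ‖₂² + γ λₙ ‖proj_{S⊥}(y)‖₂²`. -/
theorem stmt_9 (n e : ℕ) (hn : 2 ≤ n) (he : 1 ≤ e)
    (E : Matrix (Fin n) (Fin e) ℝ) (hE : IsSignedIncidence E)
    (y : Fin n → ℝ) (μ b α γ : Fin e → ℝ)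
    (hb : ∀ k, b k ≤ μ k * (Eᵀ *ᵥ y) k - α k * (μ k) ^ 2 - γ k * ((Eᵀ *ᵥ y) k) ^ 2)
    (hγ : Finset.univ.inf' (Finset.univ_nonempty_iff.mpr ⟨⟨0, he⟩⟩) γ ≤ 0)
    (lamn : ℝ)
    (hlamn : ∀ v : Fin n → ℝ, v ⬝ᵥ ((E * Eᵀ) *ᵥ v) ≤ lamn * (v ⬝ᵥ v)) :
    (E *ᵥ μ) ⬝ᵥ (projP n *ᵥ y) ≥
      (∑ k, b k) +
      (Finset.univ.inf' (Finset.univ_nonempty_iff.mpr ⟨⟨0, he⟩⟩) α) * (μ ⬝ᵥ μ) +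
      (Finset.univ.inf' (Finset.univ_nonempty_iff.mpr ⟨⟨0, he⟩⟩) γ) * lamn *
        ((projP n *ᵥ y) ⬝ᵥ (projP n *ᵥ y)) := by
  set p : Fin n → ℝ := projP n *ᵥ y with hpdef
  set ζ : Fin e → ℝ := Eᵀ *ᵥ y with hζdef
  set A := Finset.univ.inf' (Finset.univ_nonempty_iff.mpr ⟨⟨0, he⟩⟩) α with hA
  set G := Finset.univ.inf' (Finset.univ_nonempty_iff.mpr ⟨⟨0, he⟩⟩) γ with hG
  have hEp : Eᵀ *ᵥ p = ζ := transpose_projP hE y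
  -- main equality: (E μ)·p = μ·ζ
  have h1 : (E *ᵥ μ) ⬝ᵥ p = μ ⬝ᵥ ζ := by
    rw [dotProduct_comm, dotProduct_mulVec, ← mulVec_transpose, hEp, dotProduct_comm]
  -- ζ·ζ = p·(EEᵀ p)
  have h2 : p ⬝ᵥ ((E * Eᵀ) *ᵥ p) = ζ ⬝ᵥ ζ := by
    calc p ⬝ᵥ ((E * Eᵀ) *ᵥ p) = p ⬝ᵥ (E *ᵥ (Eᵀ *ᵥ p)) := by rw [← Matrix.mulVec_mulVec]
      _ = (p ᵥ* E) ⬝ᵥ (Eᵀ *ᵥ p) := dotProduct_mulVec _ _ _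
      _ = (Eᵀ *ᵥ p) ⬝ᵥ (Eᵀ *ᵥ p) := by rw [← mulVec_transpose]
      _ = ζ ⬝ᵥ ζ := by rw [hEp]
  have h3 : ζ ⬝ᵥ ζ ≤ lamn * (p ⬝ᵥ p) := h2 ▸ hlamn p
  have hGζ : G * (lamn * (p ⬝ᵥ p)) ≤ G * (ζ ⬝ᵥ ζ) :=
    mul_le_mul_of_nonpos_left h3 hγ
  have hsum : (∑ k, b k) + (∑ k, α k * μ k ^ 2) + (∑ k, γ k * ζ k ^ 2) ≤ μ ⬝ᵥ ζ := by
    rw [dotProduct]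
    rw [← Finset.sum_add_distrib, ← Finset.sum_add_distrib]
    apply Finset.sum_le_sum
    intro k _
    have := hb k
    nlinarith [this]
  have hαs : A * (μ ⬝ᵥ μ) ≤ ∑ k, α k * μ k ^ 2 := by
    rw [dotProduct, Finset.mul_sum]
    apply Finset.sum_le_sum
    intro k _
    have : A ≤ α k := Finset.inf'_le _ (Finset.mem_univ k)
    nlinarith [sq_nonneg (μ k)]
  have hγs : G * (ζ ⬝ᵥ ζ) ≤ ∑ k, γ k * ζ k ^ 2 := by
    rw [dotProduct, Finset.mul_sum]
    apply Finset.sum_le_sum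
    intro k _
    have : G ≤ γ k := Finset.inf'_le _ (Finset.mem_univ k)
    nlinarith [sq_nonneg (ζ k)]
  rw [ge_iff_le, h1]
  calc (∑ k, b k) + A * (μ ⬝ᵥ μ) + G * lamn * (p ⬝ᵥ p)
      ≤ (∑ k, b k) + (∑ k, α k * μ k ^ 2) + G * (ζ ⬝ᵥ ζ) := by
        have := hGζ
        linarith [hαs, hGζ]
    _ ≤ (∑ k, b k) + (∑ k, α k * μ k ^ 2) + (∑ k, γ k * ζ k ^ 2) := by linarith [hγs]
    _ ≤ μ ⬝ᵥ ζ := hsum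
end

section
/- (Proposition 3.) Let m > 0, M = max(1, |1 − m|), and for each i ∈ {1,…,n} let hᵢ : ℝ → ℝ be differentiable with 0 ≤ hᵢ'(s) ≤ m for all s ∈ ℝ. Let x : ℝ → ℝⁿ be differentiable with componentwise derivative xᵢ'(t) = uᵢ(t), define y(t) ∈ ℝⁿ by yᵢ(t) = hᵢ(xᵢ(t)), and define Q(t) = ½ y(t)ᵀPy(t). Then Q is differentiable, Q'(t) = Σᵢ (Py(t))ᵢ hᵢ'(xᵢ(t)) uᵢ(t), and for every t, u(t)ᵀ·proj_{S⊥}(y(t)) ≥ Q'(t) − (M/2)‖u(t)‖₂² − (M/2)‖proj_{S⊥}(y(t))‖₂². -/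
open Matrix

theorem projP_isSymm (n : ℕ) : (projP n).IsSymm := by
  simp only [projP, IsSymm, transpose_sub, transpose_one, transpose_smul]
  congr 2

section Derivatives

variable {𝕜 ι : Type*} [NontriviallyNormedField 𝕜] [Fintype ι] {f g : 𝕜 → ι → 𝕜}
  {f' g' : ι → 𝕜} {t : 𝕜}

theorem HasDerivAt.dotProduct (hf : HasDerivAt f f' t) (hg : HasDerivAt g g' t) :
    HasDerivAt (fun τ => f τ ⬝ᵥ g τ) (f' ⬝ᵥ g t + f t ⬝ᵥ g') t := by
  rw [hasDerivAt_pi] at hf hg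
  simp only [_root_.dotProduct, ← Finset.sum_add_distrib]
  exact HasDerivAt.fun_sum fun i _ => (hf i).mul (hg i)

theorem HasDerivAt.mulVec (A : Matrix ι ι 𝕜) (hf : HasDerivAt f f' t) :
    HasDerivAt (fun τ => A *ᵥ f τ) (A *ᵥ f') t := by
  rw [hasDerivAt_pi] at hf ⊢
  intro i
  simp only [Matrix.mulVec, _root_.dotProduct]
  exact HasDerivAt.fun_sum fun j _ => (hf j).const_mul (A i j)

theorem HasDerivAt.dotProduct_mulVec_self {A : Matrix ι ι 𝕜} (hA : A.IsSymm)
    (hf : HasDerivAt f f' t) :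
    HasDerivAt (fun τ => f τ ⬝ᵥ (A *ᵥ f τ)) (2 * ((A *ᵥ f t) ⬝ᵥ f')) t := by
  convert hf.dotProduct (hf.mulVec A) using 1
  rw [dotProduct_mulVec (f t), ← mulVec_transpose, hA.eq, dotProduct_comm f', two_mul]

end Derivatives

theorem abs_sub_one_le_max {c m : ℝ} (hc₀ : 0 ≤ c) (hcm : c ≤ m) :
    |c - 1| ≤ max 1 |1 - m| := by
  rcases le_total 1 c with h1 | h1
  · refine le_max_of_le_right ?_
    rw [abs_sub_comm 1 m]
    exact abs_le_abs (by linarith) (by linarith)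
  · exact le_max_of_le_left (by rw [abs_le]; constructor <;> linarith)

theorem mul_sub_one_mul_le {z c u M : ℝ} (hc : |c - 1| ≤ M) :
    z * c * u - u * z ≤ M / 2 * (u * u) + M / 2 * (z * z) := by
  rw [abs_le] at hc
  -- four times the slack is `(M - (c - 1)) (u + z)² + (M + (c - 1)) (u - z)²`
  nlinarith [mul_nonneg (by linarith : (0 : ℝ) ≤ M - (c - 1)) (sq_nonneg (u + z)),
    mul_nonneg (by linarith : (0 : ℝ) ≤ M + (c - 1)) (sq_nonneg (u - z))]

theorem sum_mul_sub_dotProduct_le {ι : Type*} [Fintype ι] {z c u : ι → ℝ} {M : ℝ}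
    (hc : ∀ i, |c i - 1| ≤ M) :
    ∑ i, z i * c i * u i - u ⬝ᵥ z ≤ M / 2 * (u ⬝ᵥ u) + M / 2 * (z ⬝ᵥ z) := by
  simp only [dotProduct, Finset.mul_sum, ← Finset.sum_sub_distrib, ← Finset.sum_add_distrib]
  exact Finset.sum_le_sum fun i _ => mul_sub_one_mul_le (hc i)

theorem stmt_12_general (n : ℕ) (m : ℝ)
    (M : ℝ) (hM : M = max 1 |1 - m|)
    (h : Fin n → ℝ → ℝ) (hdiff : ∀ i, Differentiable ℝ (h i))
    (hbound : ∀ i s, 0 ≤ deriv (h i) s ∧ deriv (h i) s ≤ m)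
    (x u : ℝ → Fin n → ℝ)
    (hx : ∀ (i : Fin n) (t : ℝ), HasDerivAt (fun τ => x τ i) (u t i) t)
    (y : ℝ → Fin n → ℝ) (hy : ∀ t i, y t i = h i (x t i))
    (Q : ℝ → ℝ) (hQ : ∀ t, Q t = (1 / 2 : ℝ) * (y t ⬝ᵥ (projP n *ᵥ y t))) :
    ∀ t : ℝ,
      HasDerivAt Q (∑ i, (projP n *ᵥ y t) i * deriv (h i) (x t i) * u t i) t ∧
      u t ⬝ᵥ (projP n *ᵥ y t) ≥
        (∑ i, (projP n *ᵥ y t) i * deriv (h i) (x t i) * u t i)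
          - M / 2 * (u t ⬝ᵥ u t)
          - M / 2 * ((projP n *ᵥ y t) ⬝ᵥ (projP n *ᵥ y t)) := by
  intro t
  have hy' : HasDerivAt y (fun i => deriv (h i) (x t i) * u t i) t := by
    rw [hasDerivAt_pi]
    intro i
    have hcomp := (hdiff i (x t i)).hasDerivAt.comp t (hx i t)
    simp only [Function.comp_def, ← hy] at hcomp
    exact hcomp
  refine ⟨?_, ?_⟩
  · rw [show Q = fun τ => (1 / 2 : ℝ) * (y τ ⬝ᵥ (projP n *ᵥ y τ)) from funext hQ]
    refine ((hy'.dotProduct_mulVec_self (projP_isSymm n)).const_mul (1 / 2 : ℝ)).congr_deriv ?_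
    simp only [dotProduct, mul_assoc]
    ring
  · have hc : ∀ i, |deriv (h i) (x t i) - 1| ≤ M := fun i =>
      hM ▸ abs_sub_one_le_max (hbound i _).1 (hbound i _).2
    linarith [sum_mul_sub_dotProduct_le (z := projP n *ᵥ y t) (u := u t) hc]

/-- Proposition 3. For integrator-like agents `ẋᵢ = uᵢ`, `yᵢ = hᵢ(xᵢ)` with
differentiable monotone output maps `0 ≤ hᵢ' ≤ m`, the `S`-constrained storage
function `Q(t) = ½ y(t)ᵀ P y(t)` is differentiable with
`Q'(t) = Σᵢ (P y(t))ᵢ hᵢ'(xᵢ(t)) uᵢ(t)`, and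
`u(t)ᵀ proj_{S⊥}(y(t)) ≥ Q'(t) - (M/2)‖u(t)‖₂² - (M/2)‖proj_{S⊥}(y(t))‖₂²`,
where `M = max(1, |1 - m|)`. -/
theorem stmt_12 (n : ℕ) (hn : 1 ≤ n) (m : ℝ) (hm : 0 < m)
    (M : ℝ) (hM : M = max 1 |1 - m|)
    (h : Fin n → ℝ → ℝ) (hdiff : ∀ i, Differentiable ℝ (h i))
    (hbound : ∀ i s, 0 ≤ deriv (h i) s ∧ deriv (h i) s ≤ m)
    (x u : ℝ → Fin n → ℝ)
    (hx : ∀ (i : Fin n) (t : ℝ), HasDerivAt (fun τ => x τ i) (u t i) t)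
    (y : ℝ → Fin n → ℝ) (hy : ∀ t i, y t i = h i (x t i))
    (Q : ℝ → ℝ) (hQ : ∀ t, Q t = (1 / 2 : ℝ) * (y t ⬝ᵥ (projP n *ᵥ y t))) :
    ∀ t : ℝ,
      HasDerivAt Q (∑ i, (projP n *ᵥ y t) i * deriv (h i) (x t i) * u t i) t ∧
      u t ⬝ᵥ (projP n *ᵥ y t) ≥
        (∑ i, (projP n *ᵥ y t) i * deriv (h i) (x t i) * u t i)
          - M / 2 * (u t ⬝ᵥ u t)
          - M / 2 * ((projP n *ᵥ y t) ⬝ᵥ (projP n *ᵥ y t)) :=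
  stmt_12_general n m M hM h hdiff hbound x u hx y hy Q hQ
end

section
/- (Pointwise compensation inequality underlying Corollary 1.) Let y ∈ ℝⁿ, μ ∈ ℝᵉ, and matrices B_o, E ∈ ℝ^{n×e}; set u = −B_oμ, z = Eμ, w = u + z. Let M, α, γ, λ₂, d_max, q, b ∈ ℝ satisfy: (i) q ≤ uᵀ·proj_{S⊥}(y) + (M/2)‖u‖₂² + (M/2)‖proj_{S⊥}(y)‖₂²; (ii) b ≤ zᵀ·proj_{S⊥}(y) − α‖μ‖₂² − γλ₂‖proj_{S⊥}(y)‖₂²; (iii) ‖B_oμ‖₂² ≤ d_max‖μ‖₂²; (iv) M ≥ 0, α ≥ d_max·M/2, and γλ₂ − M/2 > 0. Then wᵀ·proj_{S⊥}(y) ≥ q + b + (γλ₂ − M/2)‖proj_{S⊥}(y)‖₂², i.e., the compensation inequality of Theorem 2 holds with ε = γλ₂ − M/2 > 0. -/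
open Matrix

/-- Pointwise compensation inequality underlying Corollary 1. With
`u = -B_o μ`, `z = E μ`, `w = u + z`, and hypotheses (i)–(iv),
`wᵀ proj_{S⊥}(y) ≥ q + b + (γ λ₂ - M/2) ‖proj_{S⊥}(y)‖₂²`. -/
theorem stmt_14 (n e : ℕ) (hn : 1 ≤ n)
    (y : Fin n → ℝ) (μ : Fin e → ℝ)
    (Bo E : Matrix (Fin n) (Fin e) ℝ)
    (u z w : Fin n → ℝ)
    (hu : u = -(Bo *ᵥ μ)) (hz : z = E *ᵥ μ) (hw : w = u + z)
    (M α γ lam2 dmax q b : ℝ)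
    (hq : q ≤ u ⬝ᵥ (projP n *ᵥ y) + M / 2 * (u ⬝ᵥ u)
        + M / 2 * ((projP n *ᵥ y) ⬝ᵥ (projP n *ᵥ y)))
    (hb : b ≤ z ⬝ᵥ (projP n *ᵥ y) - α * (μ ⬝ᵥ μ)
        - γ * lam2 * ((projP n *ᵥ y) ⬝ᵥ (projP n *ᵥ y)))
    (hBo : (Bo *ᵥ μ) ⬝ᵥ (Bo *ᵥ μ) ≤ dmax * (μ ⬝ᵥ μ))
    (hM : 0 ≤ M) (hα : α ≥ dmax * M / 2) (hγ : γ * lam2 - M / 2 > 0) :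
    w ⬝ᵥ (projP n *ᵥ y) ≥
      q + b + (γ * lam2 - M / 2) * ((projP n *ᵥ y) ⬝ᵥ (projP n *ᵥ y)) := by
  have hw' : w ⬝ᵥ (projP n *ᵥ y) = u ⬝ᵥ (projP n *ᵥ y) + z ⬝ᵥ (projP n *ᵥ y) := by
    rw [hw, add_dotProduct]
  have huu : u ⬝ᵥ u = (Bo *ᵥ μ) ⬝ᵥ (Bo *ᵥ μ) := by
    rw [hu, neg_dotProduct, dotProduct_neg, neg_neg]
  have hμμ : 0 ≤ μ ⬝ᵥ μ := by simpa [dotProduct] using Finset.sum_nonneg fun i _ => mul_self_nonneg (μ i)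
  have h1 : M / 2 * (u ⬝ᵥ u) ≤ M / 2 * (dmax * (μ ⬝ᵥ μ)) := by
    apply mul_le_mul_of_nonneg_left (huu ▸ hBo) (by linarith)
  nlinarith [hμμ]
end
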